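/- Define f(u; λ) := u³ + (3/2)·λ·u − (1 + u²)^{3/2} for u, λ ∈ ℝ. Then: (a) for all α < 1/2, all s > 0 and all λ ≥ 0, f(α/s; λ) − f((α − 1)/s; λ) ≥ 3(1 − 2α)/(2s²); and (b) for all α > −1/2, all s ≥ (3(1 + 2α)² + 1)/(5(1 + 2α)) and all λ with 0 ≤ λ ≤ (1 + 2α)/(12s), f(α/s; λ) − f((α + 1)/s; λ) ≥ (1 + 2α)/(8s²). -/

import Mathlib

noncomputable section

/-- The function f(u; λ) := u³ + (3/2)·λ·u − (1 + u²)^{3/2}. -/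
def ff (u lam : ℝ) : ℝ := u ^ 3 + (3 / 2) * lam * u - (1 + u ^ 2) ^ ((3 : ℝ) / 2)

/-!
Write `φ_c(u) = u³ + c u² - (1 + u²)^{3/2}`, so that `f(u; λ) = φ_c(u) - c u² + (3/2) λ u`.

For `c = 3/2`, `φ_c'(u) = 3u (u + 1 - √(1 + u²)) ≥ 0`, so `φ_{3/2}` is monotone and (a) is what
remains of the quadratic and linear terms.

For `c = 1/4` and `a ≤ b`, put `p = √(1 + a²)`, `q = √(1 + b²)`. Multiplying by `p + q` turns
`q³ - p³` into `(b² - a²)(2 + a² + b² + pq)`, and the bounds `1 ≤ pq`, `p + q ≤ 2 + (a² + b²)/2`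
reduce `φ_{1/4}(b) ≤ φ_{1/4}(a)` to a polynomial inequality in `t = a + b` and `(b - a)²`, valid
when `3t² + (b - a)² ≤ 5t`. For `a = α/s`, `b = (α + 1)/s` this constraint is the hypothesis
on `s`, and the hypothesis on `λ` lets the quadratic term absorb the linear one.
-/

open Real

lemma one_add_sq_rpow_three_halves (u : ℝ) :
    (1 + u ^ 2) ^ ((3 : ℝ) / 2) = √(1 + u ^ 2) ^ 3 := by
  rw [sqrt_eq_rpow, ← rpow_natCast (_ ^ _) 3, ← rpow_mul (by positivity)]
  norm_num

lemma one_le_sqrt_one_add_sq (x : ℝ) : 1 ≤ √(1 + x ^ 2) :=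
  one_le_sqrt.2 (by nlinarith [sq_nonneg x])

lemma sqrt_one_add_sq_le (x : ℝ) : √(1 + x ^ 2) ≤ 1 + x ^ 2 / 2 :=
  (sqrt_le_left (by positivity)).2 (by nlinarith [sq_nonneg x])

lemma sqrt_one_add_sq_le_one_add {x : ℝ} (hx : 0 ≤ x) : √(1 + x ^ 2) ≤ 1 + x :=
  (sqrt_le_left (by linarith)).2 (by nlinarith)

lemma hasDerivAt_one_add_sq_rpow_three_halves (x : ℝ) :
    HasDerivAt (fun u : ℝ => (1 + u ^ 2) ^ ((3 : ℝ) / 2)) (3 * x * √(1 + x ^ 2)) x := by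
  refine (((hasDerivAt_pow 2 x).const_add 1).rpow_const (p := (3 : ℝ) / 2)
    (Or.inr (by norm_num))).congr_deriv ?_
  rw [sqrt_eq_rpow, show (3 : ℝ) / 2 - 1 = 1 / 2 by norm_num]
  push_cast
  ring

lemma monotone_cube_add_sq_sub_rpow :
    Monotone fun u : ℝ => u ^ 3 + 3 / 2 * u ^ 2 - (1 + u ^ 2) ^ ((3 : ℝ) / 2) := by
  have hderiv (x : ℝ) :
      HasDerivAt (fun u : ℝ => u ^ 3 + 3 / 2 * u ^ 2 - (1 + u ^ 2) ^ ((3 : ℝ) / 2))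
        (3 * x * (x + 1 - √(1 + x ^ 2))) x := by
    refine (((hasDerivAt_pow 3 x).add ((hasDerivAt_pow 2 x).const_mul (3 / 2))).sub
      (hasDerivAt_one_add_sq_rpow_three_halves x)).congr_deriv ?_
    norm_num
    ring
  refine monotone_of_deriv_nonneg (fun x => (hderiv x).differentiableAt) fun x => ?_
  rw [(hderiv x).deriv, mul_assoc]
  refine mul_nonneg (by norm_num) ?_
  rcases le_total 0 x with hx | hx
  · exact mul_nonneg hx (by linarith [sqrt_one_add_sq_le_one_add hx])
  · exact mul_nonneg_of_nonpos_of_nonpos hx (by linarith [one_le_sqrt_one_add_sq x])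

lemma quartic_le_of_three_mul_sq_add_le {t D : ℝ} (ht : 0 < t) (hD : 0 ≤ D)
    (hc : 3 * t ^ 2 + D ≤ 5 * t) :
    (3 * t ^ 2 + D + t) * (8 + t ^ 2 + D) ≤ 8 * t * (6 + t ^ 2 + D) := by
  nlinarith [mul_nonneg ht.le (sub_nonneg.2 hc),
    mul_nonneg (mul_nonneg ht.le ht.le) (sub_nonneg.2 hc),
    mul_nonneg hD (sub_nonneg.2 hc), sq_nonneg (D - t), mul_nonneg hD ht.le]

lemma cube_add_sq_div_four_sub_rpow_le {a b : ℝ} (hab : a ≤ b) (ht : 0 < a + b)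
    (hc : 3 * (a + b) ^ 2 + (b - a) ^ 2 ≤ 5 * (a + b)) :
    b ^ 3 + b ^ 2 / 4 - (1 + b ^ 2) ^ ((3 : ℝ) / 2) ≤
      a ^ 3 + a ^ 2 / 4 - (1 + a ^ 2) ^ ((3 : ℝ) / 2) := by
  rw [one_add_sq_rpow_three_halves, one_add_sq_rpow_three_halves]
  set p := √(1 + a ^ 2)
  set q := √(1 + b ^ 2)
  have hp2 : p ^ 2 = 1 + a ^ 2 := sq_sqrt (by positivity)
  have hq2 : q ^ 2 = 1 + b ^ 2 := sq_sqrt (by positivity)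
  have hpq : 0 < p + q := by linarith [one_le_sqrt_one_add_sq a, one_le_sqrt_one_add_sq b]
  have hd : 0 ≤ b - a := sub_nonneg.2 hab
  -- multiplying by p + q leaves `p * q` as the only square root
  have hcube : (q ^ 3 - p ^ 3) * (p + q) = (b ^ 2 - a ^ 2) * (2 + a ^ 2 + b ^ 2 + p * q) := by
    linear_combination (p ^ 2 + p * q + q ^ 2) * (hq2 - hp2) + (b ^ 2 - a ^ 2) * (hp2 + hq2)
  have hpq_ge : 1 ≤ p * q :=
    one_le_mul_of_one_le_of_one_le (one_le_sqrt_one_add_sq a) (one_le_sqrt_one_add_sq b)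
  have hsum_le : p + q ≤ 2 + (a ^ 2 + b ^ 2) / 2 := by
    linarith [sqrt_one_add_sq_le a, sqrt_one_add_sq_le b]
  have hpoly := quartic_le_of_three_mul_sq_add_le ht (sq_nonneg (b - a)) hc
  have key : (b ^ 3 - a ^ 3 + (b ^ 2 - a ^ 2) / 4) * (p + q) ≤ (q ^ 3 - p ^ 3) * (p + q) := by
    rw [hcube]
    nlinarith [mul_nonneg hd (sub_nonneg.2 hpoly),
      mul_nonneg (mul_nonneg hd ht.le) (sub_nonneg.2 hpq_ge),
      mul_nonneg (mul_nonneg hd (by positivity : 0 ≤ 3 * (a + b) ^ 2 + (b - a) ^ 2 + (a + b)))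
        (sub_nonneg.2 hsum_le)]
  linarith [le_of_mul_le_mul_right key hpq]

lemma sq_sub_sq_le_ff_sub_ff {u v lam : ℝ} (hvu : v ≤ u) (hlam : 0 ≤ lam) :
    3 / 2 * (v ^ 2 - u ^ 2) ≤ ff u lam - ff v lam := by
  have hmono := monotone_cube_add_sq_sub_rpow hvu
  simp only [ff] at hmono ⊢
  nlinarith [mul_nonneg hlam (sub_nonneg.2 hvu)]

lemma sq_sub_sq_sub_le_ff_sub_ff {a b lam : ℝ} (hab : a ≤ b) (ht : 0 < a + b)
    (hc : 3 * (a + b) ^ 2 + (b - a) ^ 2 ≤ 5 * (a + b)) :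
    (b ^ 2 - a ^ 2) / 4 - 3 / 2 * lam * (b - a) ≤ ff a lam - ff b lam := by
  have hanti := cube_add_sq_div_four_sub_rpow_le hab ht hc
  simp only [ff]
  linarith

lemma le_ff_sub_ff_sub_one (α : ℝ) {s : ℝ} (hs : 0 < s) {lam : ℝ} (hlam : 0 ≤ lam) :
    3 * (1 - 2 * α) / (2 * s ^ 2) ≤ ff (α / s) lam - ff ((α - 1) / s) lam := by
  convert sq_sub_sq_le_ff_sub_ff (u := α / s) (v := (α - 1) / s)
    (div_le_div_of_nonneg_right (by linarith) hs.le) hlam using 1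
  field_simp
  ring

lemma le_ff_sub_ff_add_one {α : ℝ} (hα : -(1 / 2 : ℝ) < α) {s : ℝ}
    (hs : (3 * (1 + 2 * α) ^ 2 + 1) / (5 * (1 + 2 * α)) ≤ s) {lam : ℝ}
    (hlam : lam ≤ (1 + 2 * α) / (12 * s)) :
    (1 + 2 * α) / (8 * s ^ 2) ≤ ff (α / s) lam - ff ((α + 1) / s) lam := by
  have hα' : 0 < 1 + 2 * α := by linarith
  have hs0 : 0 < s := (by positivity : (0 : ℝ) < _).trans_le hs
  have hs' : 3 * (1 + 2 * α) ^ 2 + 1 ≤ s * (5 * (1 + 2 * α)) :=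
    (div_le_iff₀ (by positivity)).1 hs
  have hsum : α / s + (α + 1) / s = (1 + 2 * α) / s := by field_simp; ring
  have hdiff : (α + 1) / s - α / s = 1 / s := by field_simp; ring
  have hc : 3 * (α / s + (α + 1) / s) ^ 2 + ((α + 1) / s - α / s) ^ 2 ≤
      5 * (α / s + (α + 1) / s) := by
    rw [hsum, hdiff]
    field_simp
    nlinarith
  have h := sq_sub_sq_sub_le_ff_sub_ff (lam := lam)
    (div_le_div_of_nonneg_right (by linarith) hs0.le) (by rw [hsum]; positivity) hc
  have hlam' : 3 / 2 * lam * (1 / s) ≤ (1 + 2 * α) / (8 * s ^ 2) := by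
    calc 3 / 2 * lam * (1 / s) ≤ 3 / 2 * ((1 + 2 * α) / (12 * s)) * (1 / s) := by gcongr
      _ = (1 + 2 * α) / (8 * s ^ 2) := by field_simp; ring
  have hsq : (((α + 1) / s) ^ 2 - (α / s) ^ 2) / 4 = 2 * ((1 + 2 * α) / (8 * s ^ 2)) := by
    field_simp; ring
  rw [hdiff, hsq] at h
  linarith

theorem statement17 :
    (∀ α : ℝ, α < 1 / 2 → ∀ s : ℝ, 0 < s → ∀ lam : ℝ, 0 ≤ lam →
      3 * (1 - 2 * α) / (2 * s ^ 2) ≤ ff (α / s) lam - ff ((α - 1) / s) lam) ∧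
    (∀ α : ℝ, -(1 / 2 : ℝ) < α → ∀ s : ℝ,
      (3 * (1 + 2 * α) ^ 2 + 1) / (5 * (1 + 2 * α)) ≤ s →
      ∀ lam : ℝ, 0 ≤ lam → lam ≤ (1 + 2 * α) / (12 * s) →
      (1 + 2 * α) / (8 * s ^ 2) ≤ ff (α / s) lam - ff ((α + 1) / s) lam) :=
  ⟨fun α _ _ hs _ hlam => le_ff_sub_ff_sub_one α hs hlam,
    fun _ hα _ hs _ _ hlam => le_ff_sub_ff_add_one hα hs hlam⟩
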